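/- Let k ≥ 2 and d ≥ 4 be integers, and let Γ be a strongly connected digraph with dim(Γ) = k and diameter d. Then the order of Γ is strictly less than d^(2k) + k. -/

import Mathlib

/-!  Common definitions for weak metric dimension of digraphs.

A digraph is modelled by a vertex type `V` together with an arc relation
`A : V → V → Prop` (simplicity is expressed by `Irreflexive A`). -/

/-- There is a directed walk of length `n` from `x` to `y`. -/
def walkLen {V : Type*} (A : V → V → Prop) : ℕ → V → V → Prop
  | 0 => fun x y => x = y
  | n + 1 => fun x y => ∃ z, A x z ∧ walkLen A n z y

/-- `∂(x,y)`: the length of a shortest directed path from `x` to `y`. -/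
noncomputable def ddist {V : Type*} (A : V → V → Prop) (x y : V) : ℕ :=
  sInf {n | walkLen A n x y}

/-- The two way distance `∂̃(x,y) = (∂(x,y), ∂(y,x))`. -/
noncomputable def twoDist {V : Type*} (A : V → V → Prop) (x y : V) : ℕ × ℕ :=
  (ddist A x y, ddist A y x)

/-- Strong connectivity: any vertex can be reached from any vertex by a directed walk. -/
def IsStronglyConnected {V : Type*} (A : V → V → Prop) : Prop :=
  ∀ x y : V, ∃ n, walkLen A n x y

/-- `S` is a weakly resolving set: distinct vertices have different tuples of
two way distances from the vertices of `S`. -/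
def IsWeaklyResolving {V : Type*} (A : V → V → Prop) (S : Set V) : Prop :=
  ∀ u v : V, (∀ w ∈ S, twoDist A w u = twoDist A w v) → u = v

/-- The weak metric dimension: minimum cardinality of a weakly resolving set. -/
noncomputable def wdim {V : Type*} [Fintype V] (A : V → V → Prop) : ℕ :=
  sInf {k | ∃ S : Finset V, S.card = k ∧ IsWeaklyResolving A ↑S}

/-- The diameter: the maximum of `∂(x,y)` over all ordered pairs of vertices. -/
noncomputable def diam {V : Type*} [Fintype V] (A : V → V → Prop) : ℕ :=
  sSup {m | ∃ x y : V, ddist A x y = m}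

/-- `f(n,d)`: the least positive integer `k` with `k + d^(2k) ≥ n`. -/
noncomputable def fnd (n d : ℕ) : ℕ :=
  sInf {k | 0 < k ∧ n ≤ k + d ^ (2 * k)}

/-- An isomorphism from `(V, A)` onto `(W, B)` exists. -/
def IsIsoTo {V W : Type*} (A : V → V → Prop) (B : W → W → Prop) : Prop :=
  ∃ e : V ≃ W, ∀ x y, A x y ↔ B (e x) (e y)

/-- The digraph of Example 2.3: vertices `v_1, …, v_n` are the elements
`0, …, n-1` of `Fin n` (so `v_i` is `i - 1`). -/
def egArc (n d : ℕ) : Fin n → Fin n → Prop := fun x y =>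
  (x.val = n - 1 ∧ y.val ≤ n - d) ∨
  (x.val ≤ n - d ∧ y.val = n - d + 1) ∨
  (n - d + 1 ≤ x.val ∧ x.val ≤ n - 2 ∧ y.val = x.val + 1)

/-- The `r`-th (0-based) coordinate of the tuple `v_{j+1}` in Construction 2.4;
it lies in `{1, …, d}` and `j = Σ_r (coord r - 1) d^r`. -/
def gcoord (d j r : ℕ) : ℕ := j / d ^ r % d + 1

/-- The arc relation of Construction 2.4, with the `u`-vertices `Fin k` on the left
and the `v`-vertices `Fin m` on the right of the sum. -/
def gammaArcKM (d k : ℕ) {m : ℕ} : Fin k ⊕ Fin m → Fin k ⊕ Fin m → Prop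
  | .inl _, .inl _ => False
  | .inl i, .inr j => gcoord d j.val (2 * i.val) = 1
  | .inr j, .inl i => gcoord d j.val (2 * i.val + 1) = 1
  | .inr j, .inr l => j ≠ l ∧ ∀ r < k,
      gcoord d l.val (2 * r) ≤ gcoord d j.val (2 * r) + 1 ∧
      gcoord d j.val (2 * r + 1) ≤ gcoord d l.val (2 * r + 1) + 1

/-- The arc relation of `Γ̄`: `Γ` of Construction 2.4 together with symmetric arcs
between any two distinct `u`-vertices. -/
def gammaBarArcKM (d k : ℕ) {m : ℕ} : Fin k ⊕ Fin m → Fin k ⊕ Fin m → Prop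
  | .inl i, .inl i' => i ≠ i'
  | x, y => gammaArcKM d k x y

/-- The directed cycle of length `m` on `Fin m`. -/
def cycArc (m : ℕ) [NeZero m] : Fin m → Fin m → Prop := fun x y => y = x + 1

/-- `σ` is an automorphism of the digraph `(V, A)`. -/
def IsDigraphAuto {V : Type*} (A : V → V → Prop) (σ : V ≃ V) : Prop :=
  ∀ a b, A a b ↔ A (σ a) (σ b)

/-- Vertex-transitivity. -/
def IsVertexTransitive {V : Type*} (A : V → V → Prop) : Prop :=
  ∀ x y : V, ∃ σ : V ≃ V, IsDigraphAuto A σ ∧ σ x = y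

/-- Weak distance-transitivity. -/
def IsWeaklyDistanceTransitive {V : Type*} (A : V → V → Prop) : Prop :=
  ∀ x y x' y' : V, twoDist A x y = twoDist A x' y' →
    ∃ σ : V ≃ V, IsDigraphAuto A σ ∧ σ x = x' ∧ σ y = y'

/-- Weak distance-regularity. -/
noncomputable def IsWeaklyDistanceRegular {V : Type*} (A : V → V → Prop) : Prop :=
  ∀ i j : ℕ × ℕ, (∃ a b : V, twoDist A a b = i) → (∃ a b : V, twoDist A a b = j) →
    ∀ x y x' y' : V, twoDist A x y = twoDist A x' y' →
      Set.ncard {z : V | twoDist A x z = i ∧ twoDist A z y = j} =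
      Set.ncard {z : V | twoDist A x' z = i ∧ twoDist A z y' = j}

/-- The complete digraph `K_t`. -/
def Krel (t : ℕ) : Fin t → Fin t → Prop := fun x y => x ≠ y

/-- The null digraph `K̄_t`. -/
def Nrel (t : ℕ) : Fin t → Fin t → Prop := fun _ _ => False

/-- The directed path `P_2` of length `1`. -/
def P2rel : Fin 2 → Fin 2 → Prop := fun x y => x = 0 ∧ y = 1

/-- The digraph `G_1` on `{0,1,2}` with arcs `(0,1),(1,2),(2,1),(2,0)`. -/
def G1rel : Fin 3 → Fin 3 → Prop := fun x y =>
  (x = 0 ∧ y = 1) ∨ (x = 1 ∧ y = 2) ∨ (x = 2 ∧ y = 1) ∨ (x = 2 ∧ y = 0)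

/-- The digraph `G_2` on `{0,1,2}` with arcs `(0,1),(1,0),(1,2),(2,1),(2,0)`. -/
def G2rel : Fin 3 → Fin 3 → Prop := fun x y =>
  (x = 0 ∧ y = 1) ∨ (x = 1 ∧ y = 0) ∨ (x = 1 ∧ y = 2) ∨ (x = 2 ∧ y = 1) ∨ (x = 2 ∧ y = 0)

/-- The generalized lexicographic product `G[H₀, H₁, H₂]` for a digraph `G` on `{0,1,2}`. -/
def glex3 {α β γ : Type*} (G : Fin 3 → Fin 3 → Prop)
    (H0 : α → α → Prop) (H1 : β → β → Prop) (H2 : γ → γ → Prop) :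
    α ⊕ β ⊕ γ → α ⊕ β ⊕ γ → Prop
  | .inl x, .inl y => H0 x y
  | .inl _, .inr (.inl _) => G 0 1
  | .inl _, .inr (.inr _) => G 0 2
  | .inr (.inl _), .inl _ => G 1 0
  | .inr (.inl x), .inr (.inl y) => H1 x y
  | .inr (.inl _), .inr (.inr _) => G 1 2
  | .inr (.inr _), .inl _ => G 2 0
  | .inr (.inr _), .inr (.inl _) => G 2 1
  | .inr (.inr x), .inr (.inr y) => H2 x y

/-- A clique in a digraph: the two way distance between any two distinct
vertices of `S` is `(1,1)`. -/
noncomputable def DClique {V : Type*} (A : V → V → Prop) (S : Set V) : Prop :=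
  ∀ u ∈ S, ∀ v ∈ S, u ≠ v → twoDist A u v = (1, 1)

/-- An independent set in a digraph: no arcs inside `R`. -/
def DIndependent {V : Type*} (A : V → V → Prop) (R : Set V) : Prop :=
  ∀ u ∈ R, ∀ v ∈ R, ¬ A u v


/-! Let `W` be a weakly resolving set of size `k`. A vertex outside `W` is determined by its
vector of two way distances to the vertices of `W`, whose entries lie in `{1, …, d}²`, so at most
`d^(2k)` vertices lie outside `W`. The bound is strict because for two vertices `w₁ ≠ w₂` of `W`
the triangle inequality and `d ≥ 4` exclude one prescribed pair of entries at `w₁` and `w₂`. -/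

section WeakMetricDimension

variable {V : Type*} {A : V → V → Prop}

lemma walkLen_add {m n : ℕ} {x y z : V} (hxy : walkLen A m x y) (hyz : walkLen A n y z) :
    walkLen A (m + n) x z := by
  induction m generalizing x with
  | zero => rw [Nat.zero_add]; exact (show x = y from hxy) ▸ hyz
  | succ m ih =>
    obtain ⟨t, hxt, hty⟩ := hxy
    rw [Nat.succ_add]
    exact ⟨t, hxt, ih hty⟩

lemma walkLen_ddist (hsc : IsStronglyConnected A) (x y : V) :
    walkLen A (ddist A x y) x y :=
  Nat.sInf_mem (hsc x y)

lemma ddist_triangle (hsc : IsStronglyConnected A) (x y z : V) :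
    ddist A x z ≤ ddist A x y + ddist A y z :=
  Nat.sInf_le (walkLen_add (walkLen_ddist hsc x y) (walkLen_ddist hsc y z))

lemma ddist_eq_zero_iff (hsc : IsStronglyConnected A) {x y : V} :
    ddist A x y = 0 ↔ x = y := by
  refine ⟨fun h => ?_, fun h => Nat.sInf_eq_zero.mpr (Or.inl h)⟩
  have hw := walkLen_ddist hsc x y
  rw [h] at hw
  exact hw

lemma ddist_le_diam [Fintype V] (x y : V) : ddist A x y ≤ diam A :=
  le_csSup ((Set.finite_range fun p : V × V => ddist A p.1 p.2).bddAbove.mono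
    (by rintro _ ⟨x, y, rfl⟩; exact ⟨(x, y), rfl⟩)) ⟨x, y, rfl⟩

lemma twoDist_mem_Icc_diam [Fintype V] (hsc : IsStronglyConnected A) {x y : V} (hxy : x ≠ y) :
    twoDist A x y ∈ Finset.Icc 1 (diam A) ×ˢ Finset.Icc 1 (diam A) := by
  have hxy' : ddist A x y ≠ 0 := (ddist_eq_zero_iff hsc).not.mpr hxy
  have hyx : ddist A y x ≠ 0 := (ddist_eq_zero_iff hsc).not.mpr hxy.symm
  simp only [twoDist, Finset.mem_product, Finset.mem_Icc]
  exact ⟨⟨Nat.one_le_iff_ne_zero.mpr hxy', ddist_le_diam x y⟩,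
    ⟨Nat.one_le_iff_ne_zero.mpr hyx, ddist_le_diam y x⟩⟩

lemma isWeaklyResolving_univ (hsc : IsStronglyConnected A) : IsWeaklyResolving A Set.univ :=
  fun u v h => (ddist_eq_zero_iff hsc).mp <|
    (congrArg Prod.fst (h u trivial) : ddist A u u = ddist A u v).symm.trans
      ((ddist_eq_zero_iff hsc).mpr rfl)

lemma exists_isWeaklyResolving_card_eq_wdim [Fintype V] (hsc : IsStronglyConnected A) :
    ∃ S : Finset V, S.card = wdim A ∧ IsWeaklyResolving A ↑S :=
  Nat.sInf_mem (s := {k | ∃ S : Finset V, S.card = k ∧ IsWeaklyResolving A ↑S})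
    ⟨_, Finset.univ, rfl, by simpa using isWeaklyResolving_univ hsc⟩

noncomputable def twoDistVec (A : V → V → Prop) (W : Finset V) (v : V) : W → ℕ × ℕ :=
  fun w => twoDist A w v

lemma IsWeaklyResolving.twoDistVec_injective {W : Finset V} (hW : IsWeaklyResolving A ↑W) :
    Function.Injective (twoDistVec A W) :=
  fun u v h => hW u v fun w hw => congrFun h ⟨w, hw⟩

/-- If `∂(w₁, w₂) ≤ d - 2`, no `v` has `∂(w₁, v) = d` and `∂(w₂, v) = 1` (triangle through `w₂`);
otherwise no `v` has `∂(w₁, v) = 1 = ∂(v, w₂)`, as then `∂(w₁, w₂) ≤ 2 < d - 1`. -/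
lemma exists_twoDist_pair_not_realized (hsc : IsStronglyConnected A) {d : ℕ} (hd : 4 ≤ d)
    (w₁ w₂ : V) : ∃ p ∈ Finset.Icc 1 d ×ˢ Finset.Icc 1 d, ∃ q ∈ Finset.Icc 1 d ×ˢ Finset.Icc 1 d,
      ∀ v, twoDist A w₁ v ≠ p ∨ twoDist A w₂ v ≠ q := by
  by_cases hw : ddist A w₁ w₂ + 1 < d
  · refine ⟨(d, d), by simp; omega, (1, d), by simp; omega, fun v => ?_⟩
    have := ddist_triangle hsc w₁ w₂ v
    by_contra! h
    simp only [twoDist, Prod.mk.injEq] at h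
    omega
  · refine ⟨(1, d), by simp; omega, (d, 1), by simp; omega, fun v => ?_⟩
    have := ddist_triangle hsc w₁ v w₂
    by_contra! h
    simp only [twoDist, Prod.mk.injEq] at h
    omega

lemma card_compl_lt_of_isWeaklyResolving [Fintype V] [DecidableEq V]
    (hsc : IsStronglyConnected A) {W : Finset V} (hW : IsWeaklyResolving A ↑W)
    {g : W → ℕ × ℕ}
    (hg : g ∈ Fintype.piFinset fun _ => Finset.Icc 1 (diam A) ×ˢ Finset.Icc 1 (diam A))
    (hg_vec : ∀ v, twoDistVec A W v ≠ g) :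
    Wᶜ.card < diam A ^ (2 * W.card) := by
  have hmaps : ∀ v ∈ Wᶜ, twoDistVec A W v ∈ (Fintype.piFinset fun _ : W =>
      Finset.Icc 1 (diam A) ×ˢ Finset.Icc 1 (diam A)).erase g := fun v hv =>
    Finset.mem_erase.mpr ⟨hg_vec v, Fintype.mem_piFinset.mpr fun w =>
      twoDist_mem_Icc_diam hsc fun h => Finset.mem_compl.mp hv (h ▸ w.2)⟩
  calc Wᶜ.card ≤ _ := Finset.card_le_card_of_injOn _ hmaps hW.twoDistVec_injective.injOn
    _ < _ := Finset.card_erase_lt_of_mem hg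
    _ = diam A ^ (2 * W.card) := by simp [pow_mul, sq]

end WeakMetricDimension

theorem card_lt_of_dim_diam_general {V : Type*} [Fintype V] (A : V → V → Prop)
    (hsc : IsStronglyConnected A)
    (k d : ℕ) (hk : 2 ≤ k) (hd : 4 ≤ d)
    (hdim : wdim A = k) (hdiam : diam A = d) :
    Fintype.card V < d ^ (2 * k) + k := by
  classical
  subst hdim hdiam
  obtain ⟨W, hWcard, hW⟩ := exists_isWeaklyResolving_card_eq_wdim hsc
  obtain ⟨w₁, hw₁, w₂, hw₂, hne⟩ := Finset.one_lt_card.mp (show 1 < W.card by omega)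
  obtain ⟨p, hp, q, hq, hpq⟩ := exists_twoDist_pair_not_realized hsc hd w₁ w₂
  let g : W → ℕ × ℕ := fun w => if w.1 = w₁ then p else q
  have hg : g ∈ Fintype.piFinset fun _ => Finset.Icc 1 (diam A) ×ˢ Finset.Icc 1 (diam A) :=
    Fintype.mem_piFinset.mpr fun w => by by_cases h : w.1 = w₁ <;> simp [g, h, hp, hq]
  have hg_vec : ∀ v, twoDistVec A W v ≠ g := fun v h =>
    (hpq v).elim (· (by simpa [twoDistVec, g] using congrFun h ⟨w₁, hw₁⟩))
      (· (by simpa [twoDistVec, g, hne.symm] using congrFun h ⟨w₂, hw₂⟩))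
  have hcompl := card_compl_lt_of_isWeaklyResolving hsc hW hg hg_vec
  have htot := Finset.card_add_card_compl W
  rw [hWcard] at hcompl
  omega

/-- Lemma 2.6(iii). If `k ≥ 2` and `d ≥ 4`, then a `k`-dimensional
digraph with diameter `d` has order strictly less than `d^(2k) + k`. -/
theorem card_lt_of_dim_diam {V : Type*} [Fintype V] (A : V → V → Prop)
    (hirr : Irreflexive A) (hsc : IsStronglyConnected A)
    (k d : ℕ) (hk : 2 ≤ k) (hd : 4 ≤ d)
    (hdim : wdim A = k) (hdiam : diam A = d) :
    Fintype.card V < d ^ (2 * k) + k :=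
  card_lt_of_dim_diam_general A hsc k d hk hd hdim hdiam
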